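/- For an algebraic Kähler curvature tensor R acting on r-forms, one has Σ_a i(e_a)(R_−(Je_a)φ) = 0 and Σ_a θ^a ∧ (R_+(Je_a)φ) = 0 for every r-form φ. -/

import Mathlib

/-!
For a Kähler curvature tensor, `(X, Y) ↦ R(JX, Y)` is symmetric:
`R(JX, Y) = -R(Y, JX) = R(J(JY), JX) = R(JY, X)`. Both sums are double sums over `(a, b)` of
`i(eₐ) i(e_b)`, resp. `θᵃ ∧ θᵇ ∧`, applied to `R(Jeₐ, e_b) φ`; these operators are antisymmetric
in `(a, b)`, so the sums vanish. Anticommutation of wedging with 1-forms comes from identifying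
`ω ∧ φ` with `alternatizeUncurryFin (x ↦ ω(x) • φ)`, which vanishes when applied twice to a
symmetric bilinear family.
-/

open scoped RealInnerProductSpace
open Finset

noncomputable section

/-- `n`-forms on `V`: alternating `n`-linear maps `V^n → ℝ`. -/
abbrev Form (V : Type*) [AddCommGroup V] [Module ℝ V] (n : ℕ) :=
  AlternatingMap ℝ V ℝ (Fin n)

variable {V : Type*} [NormedAddCommGroup V] [InnerProductSpace ℝ V]

/-- The metric dual covector `X♭`, as a 1-form: `X♭(Y) = ⟪X, Y⟫`. -/
def flat (X : V) : Form V 1 :=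
  AlternatingMap.ofSubsingleton ℝ V ℝ 0 ((innerSL ℝ X).toLinearMap)

/-- Interior product `i(X)` on forms of positive degree. -/
def iprodS {n : ℕ} (X : V) (φ : Form V (n + 1)) : Form V n :=
  φ.curryLeft X

/-- Wedge product of a 1-form with an `n`-form. -/
def eps {n : ℕ} (ω : Form V 1) (φ : Form V n) : Form V (n + 1) :=
  AlternatingMap.domDomCongr (finSumFinEquiv.trans (finCongr (Nat.add_comm 1 n)))
    ((TensorProduct.lid ℝ ℝ).toLinearMap.compAlternatingMap (ω.domCoprod φ))

/-- The Ricci endomorphism `ρ(X) = ∑ₐ R(X, eₐ) eₐ`. -/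
def ric {q : ℕ} (R : V →ₗ[ℝ] V →ₗ[ℝ] (V →ₗ[ℝ] V))
    (e : OrthonormalBasis (Fin q) ℝ V) (X : V) : V :=
  ∑ a, R X (e a) (e a)

/-- `R₊(X) φ = ∑ₐ θᵃ ∧ (R(X, eₐ) φ)`. -/
def Rp {q : ℕ} (act : ∀ n : ℕ, (V →ₗ[ℝ] V) → Form V n → Form V n)
    (R : V →ₗ[ℝ] V →ₗ[ℝ] (V →ₗ[ℝ] V)) (e : OrthonormalBasis (Fin q) ℝ V)
    {n : ℕ} (X : V) (φ : Form V n) : Form V (n + 1) :=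
  ∑ a, eps (flat (e a)) (act n (R X (e a)) φ)

/-- `R₋(X) φ = ∑ₐ i(eₐ) (R(X, eₐ) φ)`. -/
def Rm {q : ℕ} (act : ∀ n : ℕ, (V →ₗ[ℝ] V) → Form V n → Form V n)
    (R : V →ₗ[ℝ] V →ₗ[ℝ] (V →ₗ[ℝ] V)) (e : OrthonormalBasis (Fin q) ℝ V)
    {n : ℕ} (X : V) (φ : Form V (n + 1)) : Form V n :=
  ∑ a, iprodS (e a) (act (n + 1) (R X (e a)) φ)

/-- The curvature endomorphism `F(φ) = ∑_{a,b} θᵃ ∧ i(e_b) (R(e_b, eₐ) φ)`. -/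
def Fop {q : ℕ} (act : ∀ n : ℕ, (V →ₗ[ℝ] V) → Form V n → Form V n)
    (R : V →ₗ[ℝ] V →ₗ[ℝ] (V →ₗ[ℝ] V)) (e : OrthonormalBasis (Fin q) ℝ V)
    {n : ℕ} (φ : Form V (n + 1)) : Form V (n + 1) :=
  ∑ a, ∑ b, eps (flat (e a)) (iprodS (e b) (act (n + 1) (R (e b) (e a)) φ))

theorem Finset.sum_sum_eq_zero_of_add_swap {ι M : Type*} [AddCommGroup M] [IsAddTorsionFree M]
    (s : Finset ι) (f : ι → ι → M) (h : ∀ a b, f a b + f b a = 0) :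
    ∑ a ∈ s, ∑ b ∈ s, f a b = 0 := by
  rw [← self_eq_neg, eq_neg_iff_add_eq_zero]
  nth_rewrite 2 [Finset.sum_comm]
  simp only [← Finset.sum_add_distrib, h, Finset.sum_const_zero]

namespace Equiv.Perm

open Fin

def consSuccAbove {n : ℕ} (p : Fin (n + 1)) (τ : Perm (Fin n)) : Perm (Fin (n + 1)) :=
  p.cycleRange.symm * decomposeFin.symm (0, τ)

theorem consSuccAbove_apply_zero {n : ℕ} (p : Fin (n + 1)) (τ : Perm (Fin n)) :
    consSuccAbove p τ 0 = p := by
  simp [consSuccAbove, cycleRange_symm_zero]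

theorem consSuccAbove_apply_succ {n : ℕ} (p : Fin (n + 1)) (τ : Perm (Fin n)) (j : Fin n) :
    consSuccAbove p τ j.succ = p.succAbove (τ j) := by
  simp [consSuccAbove, cycleRange_symm_succ]

theorem sign_consSuccAbove {n : ℕ} (p : Fin (n + 1)) (τ : Perm (Fin n)) :
    sign (consSuccAbove p τ) = (-1) ^ (p : ℕ) * sign τ := by
  simp [consSuccAbove, decomposeFin.symm_sign, sign_cycleRange]

theorem bijective_uncurry_consSuccAbove (n : ℕ) :
    Function.Bijective (Function.uncurry (consSuccAbove (n := n))) := by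
  refine (Fintype.bijective_iff_injective_and_card _).2 ⟨?_, ?_⟩
  · rintro ⟨p, τ⟩ ⟨p', τ'⟩ h
    obtain rfl : p = p' := by simpa [consSuccAbove_apply_zero] using congr($h 0)
    refine Prod.ext rfl (Equiv.ext fun j => ?_)
    simpa [consSuccAbove_apply_succ] using congr($h j.succ)
  · simp [Fintype.card_perm, Nat.factorial_succ]

end Equiv.Perm

namespace AlternatingMap

variable {R M N : Type*} [CommRing R] [AddCommGroup M] [Module R M] [AddCommGroup N] [Module R N]

open Equiv Perm Fin

theorem factorial_smul_alternatizeUncurryFin_apply {n : ℕ}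
    (f : M →ₗ[R] M [⋀^Fin n]→ₗ[R] N) (v : Fin (n + 1) → M) :
    n.factorial • alternatizeUncurryFin f v =
      ∑ π : Perm (Fin (n + 1)), Perm.sign π • f (v (π 0)) (v ∘ π ∘ Fin.succ) := by
  rw [← Fintype.sum_bijective _ (bijective_uncurry_consSuccAbove n) _ _ fun _ => rfl,
    Fintype.sum_prod_type, alternatizeUncurryFin_apply, Finset.smul_sum]
  refine Fintype.sum_congr _ _ fun p => ?_
  have hcomp (τ : Perm (Fin n)) : v ∘ consSuccAbove p τ ∘ Fin.succ = p.removeNth v ∘ τ := by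
    ext j; simp [consSuccAbove_apply_succ, removeNth_apply]
  simp only [Function.uncurry_apply_pair, hcomp, map_perm, consSuccAbove_apply_zero,
    sign_consSuccAbove, smul_smul]
  simp [mul_assoc, Int.units_mul_self, Finset.sum_const, Fintype.card_perm, Units.smul_def]

end AlternatingMap

open Equiv in
theorem factorial_smul_eps_apply {n : ℕ} (ω : Form V 1) (φ : Form V n) (v : Fin (n + 1) → V) :
    n.factorial • eps ω φ v =
      ∑ π : Perm (Fin (n + 1)), Perm.sign π • (ω (fun _ => v (π 0)) • φ (v ∘ π ∘ Fin.succ)) := by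
  set E : Fin 1 ⊕ Fin n ≃ Fin (n + 1) := finSumFinEquiv.trans (finCongr (Nat.add_comm 1 n))
  have hE0 : ∀ i : Fin 1, E (.inl i) = 0 := by intro i; ext; simp [E, Fin.eq_zero i]
  have hEs : ∀ j : Fin n, E (.inr j) = j.succ := by intro j; ext; simp [E]
  have h :=
    congr((TensorProduct.lid ℝ ℝ) ($(MultilinearMap.domCoprod_alternization_eq ω φ) (v ∘ E)))
  simp only [Fintype.card_fin, Nat.factorial_one, one_mul, AlternatingMap.smul_apply, map_nsmul,
    MultilinearMap.alternatization_apply, MultilinearMap.domDomCongr_apply, map_sum] at h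
  rw [eps, AlternatingMap.domDomCongr_apply, LinearMap.compAlternatingMap_apply,
    LinearEquiv.coe_coe, ← h]
  refine Fintype.sum_equiv E.permCongr _ _ fun σ => ?_
  have hl : (fun i : Fin 1 => v (E (σ (.inl i)))) = fun _ => v (E.permCongr σ 0) := by
    ext i; simp [permCongr_apply, ← hE0 i]
  have hr : (fun j : Fin n => v (E (σ (.inr j)))) = v ∘ E.permCongr σ ∘ Fin.succ := by
    ext j; simp [permCongr_apply, ← hEs j]
  rw [Perm.sign_permCongr, Units.smul_def, map_zsmul, ← Units.smul_def,
    MultilinearMap.domCoprod_apply]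
  simp only [Function.comp_apply, TensorProduct.lid_tmul, AlternatingMap.coe_multilinearMap]
  rw [hl, hr]

instance (n : ℕ) : IsAddTorsionFree (Form V n) := .of_isTorsionFree ℝ _

theorem iprodS_sum {n : ℕ} {ι : Type*} (s : Finset ι) (X : V) (φ : ι → Form V (n + 1)) :
    iprodS X (∑ i ∈ s, φ i) = ∑ i ∈ s, iprodS X (φ i) :=
  map_sum (AlternatingMap.curryLeftLinearMap.flip X) φ s

theorem iprodS_iprodS_add_swap {n : ℕ} (X Y : V) (φ : Form V (n + 2)) :
    iprodS X (iprodS Y φ) + iprodS Y (iprodS X φ) = 0 := by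
  simpa [iprodS, AlternatingMap.curryLeft_add] using AlternatingMap.curryLeft_same φ (Y + X)

open AlternatingMap in
theorem eps_eq_alternatizeUncurryFin {n : ℕ} (ω : Form V 1) (φ : Form V n) :
    eps ω φ = alternatizeUncurryFin (((ofSubsingleton ℝ V ℝ 0).symm ω).smulRight φ) := by
  ext v
  refine nsmul_right_injective n.factorial_ne_zero ?_
  simp only [factorial_smul_eps_apply, factorial_smul_alternatizeUncurryFin_apply]
  simp [LinearMap.smulRight_apply]

open AlternatingMap in
theorem eps_sum {n : ℕ} {ι : Type*} (s : Finset ι) (ω : Form V 1) (φ : ι → Form V n) :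
    eps ω (∑ i ∈ s, φ i) = ∑ i ∈ s, eps ω (φ i) := by
  simp only [eps_eq_alternatizeUncurryFin]
  exact map_sum (alternatizeUncurryFinLM ∘ₗ LinearMap.smulRightₗ _) φ s

open AlternatingMap in
theorem eps_eps_add_swap {n : ℕ} (ω ω' : Form V 1) (φ : Form V n) :
    eps ω (eps ω' φ) + eps ω' (eps ω φ) = 0 := by
  have hcomp : ∀ (μ : V →ₗ[ℝ] ℝ) (F : V →ₗ[ℝ] Form V n),
      μ.smulRight (alternatizeUncurryFin F) =
        alternatizeUncurryFinLM ∘ₗ μ.smulRight F := fun μ F => by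
    ext x : 1; simp [LinearMap.smulRight_apply]
  simp only [eps_eq_alternatizeUncurryFin, hcomp, ← alternatizeUncurryFin_add,
    ← LinearMap.comp_add]
  refine alternatizeUncurryFin_alternatizeUncurryFinLM_comp_of_symmetric fun x y => ?_
  simp only [LinearMap.add_apply, LinearMap.smul_apply, LinearMap.smulRight_apply]
  module

theorem curvature_J_left_symm (J : V →ₗ[ℝ] V) (hJ2 : ∀ x : V, J (J x) = -x)
    (R : V →ₗ[ℝ] V →ₗ[ℝ] (V →ₗ[ℝ] V)) (hRskew : ∀ X Y : V, R X Y = -R Y X)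
    (hRJJ : ∀ X Y : V, R (J X) (J Y) = R X Y) (X Y : V) :
    R (J X) Y = R (J Y) X := by
  calc R (J X) Y = -R Y (J X) := hRskew _ _
    _ = R (J (J Y)) (J X) := by rw [hJ2, map_neg, LinearMap.neg_apply]
    _ = R (J Y) X := hRJJ _ _

theorem sum_interior_Rm_J_and_sum_wedge_Rp_J_eq_zero_general
    {m : ℕ}
    (J : V →ₗ[ℝ] V)
    (hJ2 : ∀ x : V, J (J x) = -x)
    (e : OrthonormalBasis (Fin (2 * m)) ℝ V)
    (R : V →ₗ[ℝ] V →ₗ[ℝ] (V →ₗ[ℝ] V))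
    (hRskew : ∀ X Y : V, R X Y = -R Y X)
    (hRJJ : ∀ X Y : V, R (J X) (J Y) = R X Y)
    (act : ∀ n : ℕ, (V →ₗ[ℝ] V) → Form V n → Form V n) :
    (∀ (r : ℕ) (φ : Form V (r + 2)),
        ∑ a, iprodS (e a) (Rm act R e (J (e a)) φ) = 0) ∧
    (∀ (r : ℕ) (φ : Form V r),
        ∑ a, eps (flat (e a)) (Rp act R e (J (e a)) φ) = 0) := by
  have hsymm a b : R (J (e b)) (e a) = R (J (e a)) (e b) :=
    curvature_J_left_symm J hJ2 R hRskew hRJJ _ _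
  refine ⟨fun r φ => ?_, fun r φ => ?_⟩
  · simp only [Rm, iprodS_sum]
    exact Finset.sum_sum_eq_zero_of_add_swap _ _ fun a b => by
      rw [hsymm a b]; exact iprodS_iprodS_add_swap _ _ _
  · simp only [Rp, eps_sum]
    exact Finset.sum_sum_eq_zero_of_add_swap _ _ fun a b => by
      rw [hsymm a b]; exact eps_eps_add_swap _ _ _

/-- For an algebraic Kähler curvature tensor `R` acting on `r`-forms,
`∑ₐ i(eₐ)(R₋(J eₐ)φ) = 0` and `∑ₐ θᵃ ∧ (R₊(J eₐ)φ) = 0` for every `r`-form `φ`. -/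
theorem sum_interior_Rm_J_and_sum_wedge_Rp_J_eq_zero
    {m : ℕ} (hm : 1 ≤ m)
    (J : V →ₗ[ℝ] V) (hJO : ∀ x y : V, ⟪J x, J y⟫ = ⟪x, y⟫)
    (hJ2 : ∀ x : V, J (J x) = -x)
    (e : OrthonormalBasis (Fin (2 * m)) ℝ V)
    (R : V →ₗ[ℝ] V →ₗ[ℝ] (V →ₗ[ℝ] V))
    (hRskew : ∀ X Y : V, R X Y = -R Y X)
    (hRskewadj : ∀ X Y u v : V, ⟪R X Y u, v⟫ = -⟪u, R X Y v⟫)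
    (hRbianchi : ∀ X Y Z : V, R X Y Z + R Y Z X + R Z X Y = 0)
    (hRJ : ∀ X Y v : V, R X Y (J v) = J (R X Y v))
    (hRJJ : ∀ X Y : V, R (J X) (J Y) = R X Y)
    (act : ∀ n : ℕ, (V →ₗ[ℝ] V) → Form V n → Form V n)
    (hact : ∀ (n : ℕ) (A : V →ₗ[ℝ] V) (φ : Form V n) (v : Fin n → V),
      act n A φ v = -∑ k, φ (Function.update v k (A (v k)))) :
    (∀ (r : ℕ) (φ : Form V (r + 2)),
        ∑ a, iprodS (e a) (Rm act R e (J (e a)) φ) = 0) ∧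
    (∀ (r : ℕ) (φ : Form V r),
        ∑ a, eps (flat (e a)) (Rp act R e (J (e a)) φ) = 0) :=
  sum_interior_Rm_J_and_sum_wedge_Rp_J_eq_zero_general J hJ2 e R hRskew hRJJ act

end
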